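/- arXiv:1406.0209 — 3 statements merged into one kernel-verified Lean document; each statement's English description precedes it below -/
import Mathlib

section
/- Let Y : [0, T] → ℝ be a càdlàg path with Y(0) = 0, b : [0, T] → ℝ a càdlàg barrier, and ξ ≤ b(0). Define l(s) = sup_{0 ≤ r ≤ s} (ξ + Y(r) − b(r))⁺ and X̃(s) = ξ + Y(s) − l(s). Then: (i) X̃(s) ≤ b(s) for all s ∈ [0, T]; (ii) l is non-decreasing with l(0) = 0; (iii) l increases only when X̃ is at the barrier, i.e. ∫_0^T (b(s) − X̃(s)) dl(s) = 0 (the Lebesgue–Stieltjes integral vanishes). -/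
open Set MeasureTheory

/-- A function is càdlàg: right-continuous with left limits everywhere. -/
def Cadlag (f : ℝ → ℝ) : Prop :=
  (∀ t : ℝ, ContinuousWithinAt f (Set.Ici t) t) ∧
  (∀ t : ℝ, ∃ c : ℝ, Filter.Tendsto f (nhdsWithin t (Set.Iio t)) (nhds c))

open Filter Topology Function

/-
`l` is the running maximum of `(ξ + Y - b)⁺`, so (i) and (ii) are immediate. For (iii), let `s > 0`
be a point where `X̃ s < b s`, i.e. `ξ + Y s - b s < l s`. Right-continuity keeps `ξ + Y - b` below
`l s` on some `[s, w)`, so `l` is constant there; and `l` has no jump at `s`, because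
`l s = max ((ξ + Y s - b s)⁺) (l (s-))` and `l (s-) ≥ 0`. Hence every such `s` is the left end of
an `L`-null interval `[s, w)`, and a set of such points is null: the open parts `(s, w)` are
covered by countably many of them (Lindelöf), and the points not covered by any `(s', w')` are
left ends of pairwise disjoint intervals, so there are only countably many.
-/

lemma Cadlag.comp₂ {f g : ℝ → ℝ} (hf : Cadlag f) (hg : Cadlag g) {F : ℝ → ℝ → ℝ}
    (hF : Continuous (uncurry F)) : Cadlag fun x => F (f x) (g x) := by
  refine ⟨fun t => hF.continuousAt.comp_continuousWithinAt ((hf.1 t).prodMk (hg.1 t)),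
    fun t => ?_⟩
  obtain ⟨c, hc⟩ := hf.2 t
  obtain ⟨d, hd⟩ := hg.2 t
  exact ⟨F c d, (hF.tendsto (c, d)).comp (hc.prodMk_nhds hd)⟩

lemma Cadlag.bddAbove_image {f : ℝ → ℝ} (hf : Cadlag f) {K : Set ℝ} (hK : IsCompact K) :
    BddAbove (f '' K) := by
  refine hK.induction_on (p := fun s => BddAbove (f '' s)) (by simp)
    (fun s t hst ht => ht.mono (image_mono hst))
    (fun s t hs ht => by simpa only [image_union, bddAbove_union] using ⟨hs, ht⟩) fun t _ => ?_
  obtain ⟨c, hc⟩ := hf.2 t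
  have hlt : ∀ᶠ x in 𝓝 t, f x < max (f t) c + 1 := by
    rw [← nhdsLT_sup_nhdsGE, eventually_sup]
    exact ⟨hc.eventually_lt_const ((le_max_right _ _).trans_lt (lt_add_one _)),
      (hf.1 t).eventually_lt_const ((le_max_left _ _).trans_lt (lt_add_one _))⟩
  exact ⟨_, mem_nhdsWithin_of_mem_nhds hlt, _, forall_mem_image.2 fun x hx => le_of_lt hx⟩

theorem measure_eq_zero_of_forall_exists_measure_Ico_eq_zero {α : Type*} [LinearOrder α]
    [TopologicalSpace α] [OrderTopology α] [SecondCountableTopology α] [MeasurableSpace α]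
    {μ : Measure α} {E : Set α} (h : ∀ x ∈ E, ∃ y > x, μ (Ico x y) = 0) : μ E = 0 := by
  choose! y hxy hy using h
  set U := ⋃ x ∈ E, Ioo x (y x)
  have hU : μ U = 0 := by
    obtain ⟨S, hSE, hS, hSU⟩ :=
      TopologicalSpace.isOpen_biUnion_countable E (fun x => Ioo x (y x)) fun _ _ => isOpen_Ioo
    rw [show U = _ from hSU.symm, measure_biUnion_null_iff hS]
    exact fun x hx => measure_mono_null Ioo_subset_Ico_self (hy x (hSE hx))
  have hdisj : ∀ x ∈ E \ U, ∀ x' ∈ E \ U, x < x' → Disjoint (Ioo x (y x)) (Ioo x' (y x')) := by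
    intro x hx x' hx' hlt
    have hyx : y x ≤ x' := not_lt.1 fun h => hx'.2 (mem_biUnion hx.1 ⟨hlt, h⟩)
    exact disjoint_left.2 fun z hz hz' => lt_irrefl z ((hz.2.trans_le hyx).trans hz'.1)
  have hcount : (E \ U).Countable :=
    PairwiseDisjoint.countable_of_Ioo (fun x hx x' hx' hne => hne.lt_or_gt.elim
      (hdisj x hx x' hx') fun h => (hdisj x' hx' x hx h).symm) fun x hx => hxy x hx.1
  rw [← measure_sdiff_null hU, ← biUnion_of_singleton (E \ U), measure_biUnion_null_iff hcount]
  exact fun x hx => measure_mono_null (singleton_subset_iff.2 (left_mem_Ico.2 (hxy x hx.1)))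
    (hy x hx.1)

noncomputable def runningSup (f : ℝ → ℝ) (s : ℝ) : ℝ := sSup (f '' Icc 0 s)

section runningSup

variable {f : ℝ → ℝ} {T s r : ℝ}

lemma runningSup_zero : runningSup f 0 = f 0 := by simp [runningSup]

lemma runningSup_le {M : ℝ} (hs : 0 ≤ s) (h : ∀ r ∈ Icc 0 s, f r ≤ M) : runningSup f s ≤ M :=
  csSup_le ((nonempty_Icc.2 hs).image f) (forall_mem_image.2 h)

lemma le_runningSup (hf : BddAbove (f '' Icc 0 T)) (hr : r ∈ Icc 0 s) (hs : s ≤ T) :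
    f r ≤ runningSup f s :=
  le_csSup (hf.mono (image_mono (Icc_subset_Icc_right hs))) (mem_image_of_mem f hr)

lemma monotoneOn_runningSup (hf : BddAbove (f '' Icc 0 T)) :
    MonotoneOn (runningSup f) (Icc 0 T) := fun _ hs _ ht hst =>
  runningSup_le hs.1 fun _ hr => le_runningSup hf ⟨hr.1, hr.2.trans hst⟩ ht.2

variable {L : StieltjesFunction ℝ}

lemma runningSup_le_max_leftLim (hf : BddAbove (f '' Icc 0 T))
    (hL : ∀ s ∈ Icc 0 T, L s = runningSup f s) (hs : s ∈ Icc 0 T) :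
    runningSup f s ≤ max (f s) (leftLim L s) := by
  refine runningSup_le hs.1 fun r hr => ?_
  rcases hr.2.lt_or_eq with hrs | rfl
  · have hrT : r ∈ Icc 0 T := ⟨hr.1, hrs.le.trans hs.2⟩
    calc f r ≤ runningSup f r := le_runningSup hf ⟨hr.1, le_rfl⟩ hrT.2
      _ = L r := (hL r hrT).symm
      _ ≤ leftLim L s := L.mono.le_leftLim hrs
      _ ≤ max (f s) (leftLim L s) := le_max_right _ _
  · exact le_max_left _ _

lemma exists_measure_Ioo_eq_zero_of_eventually_le_runningSup (hf : BddAbove (f '' Icc 0 T))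
    (hL : ∀ s ∈ Icc 0 T, L s = runningSup f s) (hs : s ∈ Ico 0 T)
    (h : ∀ᶠ r in 𝓝[≥] s, f r ≤ runningSup f s) : ∃ w > s, L.measure (Ioo s w) = 0 := by
  obtain ⟨w, hsw, hw⟩ := mem_nhdsGE_iff_exists_Icc_subset.1 h
  have hsw' : s < min w T := lt_min hsw hs.2
  refine ⟨min w T, hsw', measure_mono_null Ioo_subset_Ioc_self ?_⟩
  rw [StieltjesFunction.measure_Ioc, hL _ ⟨hs.1.trans hsw'.le, min_le_right _ _⟩,
    hL s (Ico_subset_Icc_self hs), ENNReal.ofReal_eq_zero, sub_nonpos]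
  refine runningSup_le (hs.1.trans hsw'.le) fun r hr => ?_
  rcases le_total r s with hrs | hsr
  · exact le_runningSup hf ⟨hr.1, hrs⟩ hs.2.le
  · exact hw ⟨hsr, hr.2.trans (min_le_left _ _)⟩

end runningSup

section Skorokhod

variable {g : ℝ → ℝ} {T : ℝ} {L : StieltjesFunction ℝ}

lemma measure_singleton_eq_zero_of_lt_runningSup
    (hg : BddAbove ((fun r => max (g r) 0) '' Icc 0 T))
    (hL : ∀ s ∈ Icc 0 T, L s = runningSup (fun r => max (g r) 0) s) {s : ℝ} (hs : s ∈ Ioc 0 T)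
    (hlt : g s < runningSup (fun r => max (g r) 0) s) : L.measure {s} = 0 := by
  have h0 : 0 ≤ leftLim L s := calc
    (0 : ℝ) ≤ max (g 0) 0 := le_max_right _ _
    _ = L 0 := by rw [hL 0 ⟨le_rfl, hs.1.le.trans hs.2⟩, runningSup_zero]
    _ ≤ leftLim L s := L.mono.le_leftLim hs.1
  have hjump := runningSup_le_max_leftLim hg hL (Ioc_subset_Icc_self hs)
  rw [max_assoc, max_eq_right h0] at hjump
  rw [StieltjesFunction.measure_singleton, hL s (Ioc_subset_Icc_self hs), ENNReal.ofReal_eq_zero,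
    sub_nonpos]
  exact (le_max_iff.1 hjump).resolve_left hlt.not_ge

lemma measure_setOf_lt_runningSup_eq_zero (hg : BddAbove ((fun r => max (g r) 0) '' Icc 0 T))
    (hgr : ∀ s, ContinuousWithinAt g (Ici s) s)
    (hL : ∀ s ∈ Icc 0 T, L s = runningSup (fun r => max (g r) 0) s) :
    L.measure {s ∈ Ioc 0 T | g s < runningSup (fun r => max (g r) 0) s} = 0 := by
  set E := {s ∈ Ioc 0 T | g s < runningSup (fun r => max (g r) 0) s}
  have hatom : ∀ s ∈ E, L.measure {s} = 0 := fun s hs =>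
    measure_singleton_eq_zero_of_lt_runningSup hg hL hs.1 hs.2
  have hE : L.measure (E \ {T}) = 0 := by
    refine measure_eq_zero_of_forall_exists_measure_Ico_eq_zero fun s hs => ?_
    have hsT : s ∈ Ico 0 T := ⟨hs.1.1.1.le, lt_of_le_of_ne hs.1.1.2 hs.2⟩
    have hl0 : 0 ≤ runningSup (fun r => max (g r) 0) s :=
      (le_max_right (g s) 0).trans (le_runningSup hg ⟨hsT.1, le_rfl⟩ hsT.2.le)
    have hflat : ∀ᶠ r in 𝓝[≥] s, max (g r) 0 ≤ runningSup (fun r => max (g r) 0) s :=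
      ((hgr s).eventually_lt_const hs.1.2).mono fun r hr => max_le hr.le hl0
    obtain ⟨w, hsw, hw⟩ := exists_measure_Ioo_eq_zero_of_eventually_le_runningSup hg hL hsT hflat
    refine ⟨w, hsw, ?_⟩
    rw [← Ioo_insert_left hsw, insert_eq]
    exact measure_union_null (hatom s hs.1) hw
  by_cases hT : T ∈ E
  · rwa [← measure_sdiff_null (hatom T hT)]
  · rwa [← sdiff_singleton_eq_self hT]

end Skorokhod

theorem stmt_3_general (T : ℝ) (Y b : ℝ → ℝ)
    (hY : Cadlag Y) (hY0 : Y 0 = 0) (hb : Cadlag b)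
    (ξ : ℝ) (hξ : ξ ≤ b 0)
    (l : ℝ → ℝ)
    (hl : ∀ s, l s = sSup ((fun r => max (ξ + Y r - b r) 0) '' Set.Icc 0 s))
    (Xt : ℝ → ℝ) (hXt : ∀ s, Xt s = ξ + Y s - l s)
    -- `L` is the Lebesgue–Stieltjes extension of `l` to `ℝ`
    (L : StieltjesFunction ℝ) (hL : ∀ s ∈ Set.Icc 0 T, L s = l s) :
    (∀ s ∈ Set.Icc 0 T, Xt s ≤ b s) ∧
    (MonotoneOn l (Set.Icc 0 T) ∧ l 0 = 0) ∧
    (∫ s in Set.Ioc (0 : ℝ) T, (b s - Xt s) ∂L.measure = 0) := by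
  obtain rfl : l = runningSup (fun r => max (ξ + Y r - b r) 0) := funext hl
  have hbdd : BddAbove ((fun r => max (ξ + Y r - b r) 0) '' Icc 0 T) :=
    (hY.comp₂ hb (F := fun y c => max (ξ + y - c) 0) (by fun_prop)).bddAbove_image isCompact_Icc
  have hgr : ∀ s, ContinuousWithinAt (fun r => ξ + Y r - b r) (Ici s) s := fun s =>
    (continuousWithinAt_const.add (hY.1 s)).sub (hb.1 s)
  have hle : ∀ s ∈ Icc 0 T, ξ + Y s - b s ≤ runningSup (fun r => max (ξ + Y r - b r) 0) s :=
    fun s hs => (le_max_left _ _).trans (le_runningSup hbdd ⟨hs.1, le_rfl⟩ hs.2)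
  refine ⟨fun s hs => by linarith [hXt s, hle s hs], ⟨monotoneOn_runningSup hbdd, ?_⟩, ?_⟩
  · simpa [runningSup_zero, hY0] using hξ
  · refine setIntegral_eq_zero_of_ae_eq_zero ?_
    filter_upwards [measure_eq_zero_iff_ae_notMem.1
      (measure_setOf_lt_runningSup_eq_zero hbdd hgr hL)] with s hsE hs
    have hcontact := not_lt.1 fun h => hsE ⟨hs, h⟩
    linarith [hXt s, hle s (Ioc_subset_Icc_self hs)]

theorem stmt_3 (T : ℝ) (hT : 0 ≤ T) (Y b : ℝ → ℝ)
    (hY : Cadlag Y) (hY0 : Y 0 = 0) (hb : Cadlag b)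
    (ξ : ℝ) (hξ : ξ ≤ b 0)
    (l : ℝ → ℝ)
    (hl : ∀ s, l s = sSup ((fun r => max (ξ + Y r - b r) 0) '' Set.Icc 0 s))
    (Xt : ℝ → ℝ) (hXt : ∀ s, Xt s = ξ + Y s - l s)
    -- `L` is the Lebesgue–Stieltjes extension of `l` to `ℝ`
    (L : StieltjesFunction ℝ) (hL : ∀ s ∈ Set.Icc 0 T, L s = l s) :
    (∀ s ∈ Set.Icc 0 T, Xt s ≤ b s) ∧
    (MonotoneOn l (Set.Icc 0 T) ∧ l 0 = 0) ∧
    (∫ s in Set.Ioc (0 : ℝ) T, (b s - Xt s) ∂L.measure = 0) :=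
  stmt_3_general T Y b hY hY0 hb ξ hξ l hl Xt hXt L hL
end

section
/- Let Y : [0, T] → ℝ be a càdlàg path with Y(0) = 0 and b : [0, T] → ℝ a càdlàg barrier, and let X̃(s) = ξ + Y(s) − sup_{0 ≤ r ≤ s}(ξ + Y(r) − b(r))⁺ with ξ ≤ b(0). Suppose Y is continuous at a time t ∈ (0, T], b has a downward jump at t (b(t) < b(t−)), and X̃(t−) > b(t). Then X̃(t) = b(t). -/
/-!
The reflection term `sSup (f '' Icc 0 s)`, with `f r = max (ξ + Y r - b r) 0`, is a running
supremum. Since `Y` is continuous at `t`, its left limit at `t` is `L = ξ + Y t - X̃(t-)`, and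
`X̃(t-) > b t` says exactly that `L < ξ + Y t - b t = f t`. Every earlier value of `f` is at most
`L`, so the supremum over `[0, t]` is attained at `t` and `X̃ t = ξ + Y t - f t = b t`.
Càdlàg paths are bounded on compact intervals, so all these suprema are genuine.
-/

open Filter Set Topology Bornology

lemma Cadlag.exists_mem_nhds_isBounded_image {f : ℝ → ℝ} (hf : Cadlag f) (x : ℝ) :
    ∃ u ∈ 𝓝 x, IsBounded (f '' u) := by
  obtain ⟨c, hc⟩ := hf.2 x
  refine ⟨f ⁻¹' Metric.ball c 1 ∪ f ⁻¹' Metric.ball (f x) 1, ?_, ?_⟩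
  · rw [← nhdsLT_sup_nhdsGE]
    exact union_mem_sup (hc (Metric.ball_mem_nhds _ one_pos))
      (hf.1 x (Metric.ball_mem_nhds _ one_pos))
  · rw [image_union]
    exact (Metric.isBounded_ball.subset (image_preimage_subset _ _)).union
      (Metric.isBounded_ball.subset (image_preimage_subset _ _))

lemma Cadlag.isBounded_image {f : ℝ → ℝ} (hf : Cadlag f) {K : Set ℝ} (hK : IsCompact K) :
    IsBounded (f '' K) := by
  refine hK.induction_on (p := fun s => IsBounded (f '' s)) (by simp)
    (fun s t hst ht => ht.subset (image_mono hst))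
    (fun s t hs ht => by simpa only [image_union] using hs.union ht) fun x _ => ?_
  obtain ⟨u, hu, hbdd⟩ := hf.exists_mem_nhds_isBounded_image x
  exact ⟨u, mem_nhdsWithin_of_mem_nhds hu, hbdd⟩

section RunningSup

variable {α β : Type*} [LinearOrder α] [ConditionallyCompleteLinearOrder β]
  {g : α → β} {a r s t : α}

lemma le_csSup_image_Icc (hbdd : BddAbove (g '' Icc a t)) (hr : r ∈ Icc a s) (hst : s ≤ t) :
    g r ≤ sSup (g '' Icc a s) :=
  le_csSup (hbdd.mono (image_mono (Icc_subset_Icc_right hst))) (mem_image_of_mem g hr)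

variable [TopologicalSpace α] [ClosedIicTopology α] [TopologicalSpace β] [ClosedIciTopology β]

lemma csSup_image_Icc_eq_of_tendsto_nhdsLT [(𝓝[<] t).NeBot] {L : β} (hat : a ≤ t)
    (hbdd : BddAbove (g '' Icc a t))
    (hL : Tendsto (fun s => sSup (g '' Icc a s)) (𝓝[<] t) (𝓝 L)) (hlt : L < g t) :
    sSup (g '' Icc a t) = g t := by
  refine IsGreatest.csSup_eq ⟨mem_image_of_mem g (right_mem_Icc.2 hat), ?_⟩
  rintro _ ⟨r, hr, rfl⟩
  rcases hr.2.lt_or_eq with hrt | rfl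
  · refine (ge_of_tendsto hL ?_).trans hlt.le
    filter_upwards [Ioo_mem_nhdsLT hrt] with s hs
    exact le_csSup_image_Icc hbdd ⟨hr.1, hs.1.le⟩ hs.2.le
  · exact le_rfl

end RunningSup

theorem stmt_6_general (T : ℝ) (Y b : ℝ → ℝ)
    (hY : Cadlag Y) (hb : Cadlag b)
    (ξ : ℝ)
    (Xt : ℝ → ℝ)
    (hXt : ∀ s, Xt s = ξ + Y s - sSup ((fun r => max (ξ + Y r - b r) 0) '' Set.Icc 0 s))
    (t : ℝ) (ht : t ∈ Set.Ioc 0 T)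
    (hYcont : ContinuousAt Y t)
    (Xleft : ℝ) (hXleft : Filter.Tendsto Xt (nhdsWithin t (Set.Iio t)) (nhds Xleft))
    (habove : b t < Xleft) :
    Xt t = b t := by
  set f : ℝ → ℝ := fun r => max (ξ + Y r - b r) 0
  have hbdd : BddAbove (f '' Icc 0 t) := by
    obtain ⟨A, hA⟩ := (hY.isBounded_image isCompact_Icc).bddAbove
    obtain ⟨B, hB⟩ := (hb.isBounded_image isCompact_Icc).bddBelow
    refine ⟨max (ξ + A - B) 0, forall_mem_image.2 fun r hr => max_le_max ?_ le_rfl⟩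
    linarith [hA (mem_image_of_mem Y hr), hB (mem_image_of_mem b hr)]
  have hM : Tendsto (fun s => sSup (f '' Icc 0 s)) (𝓝[<] t) (𝓝 (ξ + Y t - Xleft)) := by
    refine (((hYcont.tendsto.mono_left nhdsWithin_le_nhds).const_add ξ).sub hXleft).congr
      fun s => ?_
    rw [hXt]
    ring
  have hM0 : 0 ≤ ξ + Y t - Xleft := by
    refine ge_of_tendsto hM ?_
    filter_upwards [Ioo_mem_nhdsLT ht.1] with s hs
    exact (le_max_right _ _).trans (le_csSup_image_Icc hbdd ⟨hs.1.le, le_rfl⟩ hs.2.le)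
  have hft : f t = ξ + Y t - b t := max_eq_left (by linarith)
  rw [hXt, csSup_image_Icc_eq_of_tendsto_nhdsLT ht.1.le hbdd hM (by linarith), hft]
  ring

theorem stmt_6 (T : ℝ) (hT : 0 < T) (Y b : ℝ → ℝ)
    (hY : Cadlag Y) (hY0 : Y 0 = 0) (hb : Cadlag b)
    (ξ : ℝ) (hξ : ξ ≤ b 0)
    (Xt : ℝ → ℝ)
    (hXt : ∀ s, Xt s = ξ + Y s - sSup ((fun r => max (ξ + Y r - b r) 0) '' Set.Icc 0 s))
    (t : ℝ) (ht : t ∈ Set.Ioc 0 T)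
    (hYcont : ContinuousAt Y t)
    (bleft : ℝ) (hbleft : Filter.Tendsto b (nhdsWithin t (Set.Iio t)) (nhds bleft))
    (hjump : b t < bleft)
    (Xleft : ℝ) (hXleft : Filter.Tendsto Xt (nhdsWithin t (Set.Iio t)) (nhds Xleft))
    (habove : b t < Xleft) :
    Xt t = b t :=
  stmt_6_general T Y b hY hb ξ Xt hXt t ht hYcont Xleft hXleft habove
end

section
/- Let Y : [0, T] → ℝ be a continuous path with Y(0) = 0 and b : [0, T] → ℝ a càdlàg barrier. For 0 ≤ t ≤ T and x ≤ b(t) define the reflected path started at (t, x) by X̃^{t,x}(s) = x + (Y(s) − Y(t)) − sup_{t ≤ r ≤ s}(x + Y(r) − Y(t) − b(r))⁺ for s ∈ [t, T]. Then the flow property holds: for all 0 ≤ t ≤ r ≤ s ≤ T and x ≤ b(t), X̃^{t,x}(s) = X̃^{r, X̃^{t,x}(r)}(s). -/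
/-!
Write `f = x + Y - Y t - b` for the excess of the free path over the barrier, so that
`X̃^{t,x}(s) = x + Y s - Y t - L(t, s)` with `L(t, s) = sup_{[t, s]} f⁺` (`skorokhodRegulator`).
Restarting at time `r` from `X̃^{t,x}(r)` lowers the excess by `A = L(t, r) ≥ 0`, and
`sup_{[r, s]} (f - A)⁺ = max (sup_{[r, s]} f⁺) A - A`, so `L(t, s) = max A (sup_{[r, s]} f⁺)`
splits as `A + L'(r, s)`: the two pushes add up to the original one.
The suprema are finite because `Y` is continuous and a càdlàg `b` is locally, hence on compact
intervals, bounded below.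
-/

open Set Filter Topology

theorem IsCompact.bddBelow_image_of_eventually_le {X α : Type*} [TopologicalSpace X]
    [Preorder α] [IsCodirectedOrder α] [Nonempty α] {f : X → α} {K : Set X}
    (hK : IsCompact K) (hf : ∀ x ∈ K, ∃ m, ∀ᶠ y in 𝓝 x, m ≤ f y) : BddBelow (f '' K) := by
  refine hK.induction_on (p := fun S => BddBelow (f '' S)) (by simp)
    (fun _ _ hst h => h.mono (image_mono hst))
    (fun _ _ hs ht => by simpa only [image_union] using hs.union ht) fun x hx => ?_
  obtain ⟨m, hm⟩ := hf x hx
  exact ⟨{y | m ≤ f y}, mem_nhdsWithin_of_mem_nhds hm, m, by rintro _ ⟨y, hy, rfl⟩; exact hy⟩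

theorem Cadlag.eventually_le {b : ℝ → ℝ} (hb : Cadlag b) (x : ℝ) :
    ∃ m, ∀ᶠ y in 𝓝 x, m ≤ b y := by
  obtain ⟨L, hL⟩ := hb.2 x
  refine ⟨min (L - 1) (b x - 1), ?_⟩
  rw [← nhdsLT_sup_nhdsGE, eventually_sup]
  exact ⟨(hL.eventually_const_le (sub_one_lt L)).mono fun _ hy => (min_le_left _ _).trans hy,
    ((hb.1 x).eventually_const_le (sub_one_lt _)).mono fun _ hy => (min_le_right _ _).trans hy⟩

theorem Cadlag.bddBelow_image_Icc {b : ℝ → ℝ} (hb : Cadlag b) (a c : ℝ) :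
    BddBelow (b '' Icc a c) :=
  isCompact_Icc.bddBelow_image_of_eventually_le fun x _ => hb.eventually_le x

theorem BddAbove.image_max_zero {X : Type*} {f : X → ℝ} {K : Set X} (hf : BddAbove (f '' K)) :
    BddAbove ((fun u => max (f u) 0) '' K) := by
  obtain ⟨M, hM⟩ := hf
  exact ⟨max M 0, by rintro _ ⟨u, hu, rfl⟩; exact max_le_max (hM ⟨u, hu, rfl⟩) le_rfl⟩

noncomputable def skorokhodRegulator (f : ℝ → ℝ) (t s : ℝ) : ℝ :=
  sSup ((fun u => max (f u) 0) '' Icc t s)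

theorem skorokhodRegulator_nonneg {f : ℝ → ℝ} {t s : ℝ} (hts : t ≤ s)
    (hf : BddAbove (f '' Icc t s)) : 0 ≤ skorokhodRegulator f t s := by
  exact (le_max_right (f t) 0).trans (le_csSup hf.image_max_zero ⟨t, left_mem_Icc.2 hts, rfl⟩)

theorem skorokhodRegulator_eq_add {f : ℝ → ℝ} {t r s : ℝ} (htr : t ≤ r) (hrs : r ≤ s)
    (hf : BddAbove (f '' Icc t s)) :
    skorokhodRegulator f t s = skorokhodRegulator f t r +
      skorokhodRegulator (fun u => f u - skorokhodRegulator f t r) r s := by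
  set g : ℝ → ℝ := fun u => max (f u) 0
  set A := skorokhodRegulator f t r
  have hg : ∀ a c, Icc a c ⊆ Icc t s → BddAbove (g '' Icc a c) := fun _ _ h =>
    (hf.mono (image_mono h)).image_max_zero
  have hA : 0 ≤ A :=
    skorokhodRegulator_nonneg htr (hf.mono (image_mono (Icc_subset_Icc_right hrs)))
  have hne : (g '' Icc r s).Nonempty := (nonempty_Icc.2 hrs).image g
  have hsplit : skorokhodRegulator f t s = max A (sSup (g '' Icc r s)) := by
    rw [skorokhodRegulator, ← Icc_union_Icc_eq_Icc htr hrs, image_union]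
    exact csSup_union (hg _ _ (Icc_subset_Icc_right hrs)) ((nonempty_Icc.2 htr).image g)
      (hg _ _ (Icc_subset_Icc_left htr)) hne
  have hshift : (fun u => max (f u - A) 0) '' Icc r s = (fun y => max y A - A) '' (g '' Icc r s) := by
    rw [image_image]
    refine image_congr fun u _ => ?_
    rw [max_assoc, max_eq_right hA, ← max_sub_sub_right, sub_self]
  have hrestart : skorokhodRegulator (fun u => f u - A) r s = max (sSup (g '' Icc r s)) A - A := by
    rw [skorokhodRegulator, hshift, ← Monotone.map_csSup_of_continuousAt (by fun_prop)
      (fun _ _ h => sub_le_sub_right (max_le_max h le_rfl) A) hne (hg _ _ (Icc_subset_Icc_left htr))]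
  rw [hsplit, hrestart, max_comm]
  ring

theorem stmt_7_general (T : ℝ) (Y b : ℝ → ℝ)
    (hY : Continuous Y) (hb : Cadlag b)
    (Xt : ℝ → ℝ → ℝ → ℝ)
    (hXt : ∀ t x s, Xt t x s =
      x + (Y s - Y t) - sSup ((fun r => max (x + Y r - Y t - b r) 0) '' Set.Icc t s)) :
    ∀ t r s x, 0 ≤ t → t ≤ r → r ≤ s → s ≤ T → x ≤ b t →
      Xt t x s = Xt r (Xt t x r) s := by
  intro t r s x _ htr hrs _ _
  have hX : ∀ t x s, Xt t x s =
      x + (Y s - Y t) - skorokhodRegulator (fun u => x + Y u - Y t - b u) t s := hXt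
  set f : ℝ → ℝ := fun u => x + Y u - Y t - b u
  have hf : BddAbove (f '' Icc t s) := by
    obtain ⟨M, hM⟩ := ((isCompact_Icc (a := t) (b := s)).image hY).bddAbove
    obtain ⟨m, hm⟩ := hb.bddBelow_image_Icc t s
    refine ⟨x + M - Y t - m, ?_⟩
    rintro _ ⟨u, hu, rfl⟩
    linarith [hM (mem_image_of_mem Y hu), hm (mem_image_of_mem b hu)]
  have hrestart : (fun u => Xt t x r + Y u - Y r - b u) = fun u => f u - skorokhodRegulator f t r := by
    funext u
    rw [hX]
    ring
  rw [hX r, hrestart, hX t x s, hX t x r, skorokhodRegulator_eq_add htr hrs hf]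
  ring

theorem stmt_7 (T : ℝ) (hT : 0 ≤ T) (Y b : ℝ → ℝ)
    (hY : Continuous Y) (hY0 : Y 0 = 0) (hb : Cadlag b)
    (Xt : ℝ → ℝ → ℝ → ℝ)
    (hXt : ∀ t x s, Xt t x s =
      x + (Y s - Y t) - sSup ((fun r => max (x + Y r - Y t - b r) 0) '' Set.Icc t s)) :
    ∀ t r s x, 0 ≤ t → t ≤ r → r ≤ s → s ≤ T → x ≤ b t →
      Xt t x s = Xt r (Xt t x r) s :=
  stmt_7_general T Y b hY hb Xt hXt
end
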